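/- Let P be a normal logic program and 𝔄_P = (A_P, Att_P) its associated SETAF. Then a labelling L is a stable labelling of 𝔄_P if and only if L2I_P(L) is a stable model of P. -/
import Mathlib


/-- A rule of a normal logic program:
`head ← bodyPos, not bodyNeg`. -/
structure Rule (α : Type) where
  head : α
  bodyPos : Finset α
  bodyNeg : Finset α
deriving DecidableEq

/-- A normal logic program (NLP): a finite set of rules. -/
abbrev NLP (α : Type) := Finset (Rule α)

variable {α : Type} [DecidableEq α]

/-- The atoms occurring in a rule. -/
def Rule.atoms (r : Rule α) : Finset α :=
  insert r.head (r.bodyPos ∪ r.bodyNeg)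

/-- The Herbrand base of a program: all atoms occurring in it. -/
def HB (P : NLP α) : Finset α := P.sup Rule.atoms

/-- A three-valued interpretation, given by its sets of true and false atoms. -/
structure Interp (α : Type) where
  T : Set α
  F : Set α

/-- `I` is a 3-valued interpretation over the Herbrand base `H`. -/
def IsInterp (H : Finset α) (I : Interp α) : Prop :=
  I.T ⊆ ↑H ∧ I.F ⊆ ↑H ∧ Disjoint I.T I.F

/-- A rule of a positive program obtained as a reduct; `hasU` records whether
the special atom `u` (undefined in every interpretation) occurs in its body. -/
structure PosRule (α : Type) where
  head : α
  bodyPos : Finset α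
  hasU : Prop

/-- The reduct `P/I`: delete every rule whose negative body meets `I.T`,
delete each `not b` with `b ∈ I.F`, and replace the remaining negative
literals by the special atom `u`. -/
def reduct (P : NLP α) (I : Interp α) : Set (PosRule α) :=
  { q | ∃ r ∈ P, (∀ b ∈ r.bodyNeg, b ∉ I.T) ∧
        q.head = r.head ∧ q.bodyPos = r.bodyPos ∧
        (q.hasU ↔ ∃ b ∈ r.bodyNeg, b ∉ I.F) }

/-- The `Ψ` operator of a positive program `Q` relative to the Herbrand base
`H`; the special atom `u` is neither true nor false in any interpretation. -/
def PsiOp (H : Finset α) (Q : Set (PosRule α)) (J : Interp α) : Interp α where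
  T := { c | c ∈ H ∧ ∃ q ∈ Q, q.head = c ∧ ¬ q.hasU ∧ ∀ a ∈ q.bodyPos, a ∈ J.T }
  F := { c | c ∈ H ∧ ∀ q ∈ Q, q.head = c → ∃ a ∈ q.bodyPos, a ∈ J.F }

/-- Iteration of `Ψ` starting from `⟨∅, H⟩`. -/
def PsiIter (H : Finset α) (Q : Set (PosRule α)) : ℕ → Interp α
  | 0 => ⟨∅, ↑H⟩
  | n + 1 => PsiOp H Q (PsiIter H Q n)

/-- `Ω_P(I)`: the least three-valued model of the reduct `P/I`,
obtained as the `ω`-iteration of `Ψ`. -/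
def OmegaOp (H : Finset α) (P : NLP α) (I : Interp α) : Interp α where
  T := ⋃ n, (PsiIter H (reduct P I) n).T
  F := ⋂ n, (PsiIter H (reduct P I) n).F

/-- `I` is a partial stable model of `P` (over Herbrand base `H`). -/
def IsPSModel (H : Finset α) (P : NLP α) (I : Interp α) : Prop :=
  IsInterp H I ∧ OmegaOp H P I = I

/-- Well-founded model: a partial stable model with `⊆`-minimal true part. -/
def IsWFModel (H : Finset α) (P : NLP α) (I : Interp α) : Prop :=
  IsPSModel H P I ∧ ∀ J, IsPSModel H P J → ¬ J.T ⊂ I.T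

/-- Regular model: a partial stable model with `⊆`-maximal true part. -/
def IsRegularModel (H : Finset α) (P : NLP α) (I : Interp α) : Prop :=
  IsPSModel H P I ∧ ∀ J, IsPSModel H P J → ¬ I.T ⊂ J.T

/-- Stable model: a partial stable model with `T ∪ F = H`. -/
def IsStableModel (H : Finset α) (P : NLP α) (I : Interp α) : Prop :=
  IsPSModel H P I ∧ I.T ∪ I.F = ↑H

/-- L-stable model: a partial stable model with `⊆`-maximal `T ∪ F`. -/
def IsLStableModel (H : Finset α) (P : NLP α) (I : Interp α) : Prop :=
  IsPSModel H P I ∧ ∀ J, IsPSModel H P J → ¬ (I.T ∪ I.F) ⊂ (J.T ∪ J.F)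

/-- `IsStatement P c V R`: there is a statement of `P` with conclusion `c`,
vulnerabilities `V` and rules `R`.  A statement is built from a rule
`r = c ← a₁,…,a_m, not b₁,…,not b_n ∈ P` together with statements `sᵢ` for the
positive body atoms `aᵢ` (with `r` not among their rules); its vulnerabilities
are `Vul(s₁) ∪ … ∪ Vul(s_m) ∪ {b₁,…,b_n}` and its rules are
`Rules(s₁) ∪ … ∪ Rules(s_m) ∪ {r}`. -/
inductive IsStatement (P : NLP α) : α → Finset α → Finset (Rule α) → Prop where
  | mk (r : Rule α) (hr : r ∈ P) (v : α → Finset α) (ρ : α → Finset (Rule α))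
      (hsub : ∀ a ∈ r.bodyPos, IsStatement P a (v a) (ρ a))
      (hnr : ∀ a ∈ r.bodyPos, r ∉ ρ a) :
      IsStatement P r.head (r.bodyPos.biUnion v ∪ r.bodyNeg)
        (insert r (r.bodyPos.biUnion ρ))

/-- `c` is an argument of `P`: it is the conclusion of some statement. -/
def IsArg (P : NLP α) (c : α) : Prop := ∃ V R, IsStatement P c V R

open Classical in
/-- The set `A_P` of arguments of `P`. -/
noncomputable def argsOf (P : NLP α) : Finset α := (HB P).filter (IsArg P)

/-- `B` meets every vulnerability set of `a` in `P`. -/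
def HitsVul (P : NLP α) (B : Finset α) (a : α) : Prop :=
  ∀ V R, IsStatement P a V R → ∃ b ∈ B, b ∈ V

/-- A SETAF: a finite set of arguments and an attack relation between
finite sets of arguments and arguments. -/
structure SETAF (α : Type) where
  args : Finset α
  att : Finset α → α → Prop

/-- Well-formedness of a SETAF: attackers are nonempty sets of arguments
attacking arguments, and attacking sets are `⊆`-minimal. -/
def SETAF.Wf (S : SETAF α) : Prop :=
  (∀ B a, S.att B a → B.Nonempty ∧ B ⊆ S.args ∧ a ∈ S.args) ∧
  (∀ B a, S.att B a → ∀ B', B' ⊂ B → ¬ S.att B' a)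

/-- The SETAF `𝔄_P` associated with an NLP `P`: its arguments are the
conclusions of the statements of `P`, and `B` attacks `a` iff `B` is a
`⊆`-minimal set of arguments meeting every vulnerability set of `a`. -/
noncomputable def setafOf (P : NLP α) : SETAF α where
  args := argsOf P
  att := fun B a =>
    B ⊆ argsOf P ∧ a ∈ argsOf P ∧ HitsVul P B a ∧ ∀ B', B' ⊂ B → ¬ HitsVul P B' a

/-- Labels for arguments. -/
inductive Lab : Type
  | inn | out | und
deriving DecidableEq

/-- `in(L)`. -/
def labIn (S : SETAF α) (L : α → Lab) : Set α := { a | a ∈ S.args ∧ L a = Lab.inn }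

/-- `out(L)`. -/
def labOut (S : SETAF α) (L : α → Lab) : Set α := { a | a ∈ S.args ∧ L a = Lab.out }

/-- `undec(L)`. -/
def labUnd (S : SETAF α) (L : α → Lab) : Set α := { a | a ∈ S.args ∧ L a = Lab.und }

/-- Admissible labelling. -/
def AdmissibleLab (S : SETAF α) (L : α → Lab) : Prop :=
  ∀ a ∈ S.args,
    (L a = Lab.inn → ∀ B, S.att B a → ∃ b ∈ B, L b = Lab.out) ∧
    (L a = Lab.out → ∃ B, S.att B a ∧ ∀ b ∈ B, L b = Lab.inn)

/-- Complete labelling. -/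
def CompleteLab (S : SETAF α) (L : α → Lab) : Prop :=
  AdmissibleLab S L ∧
  ∀ a ∈ S.args, L a = Lab.und →
    (∃ B, S.att B a ∧ ∀ b ∈ B, L b ≠ Lab.out) ∧
    (∀ B, S.att B a → ∃ b ∈ B, L b ≠ Lab.inn)

/-- Grounded labelling: complete with `⊆`-minimal `in(L)`. -/
def GroundedLab (S : SETAF α) (L : α → Lab) : Prop :=
  CompleteLab S L ∧ ∀ L', CompleteLab S L' → ¬ labIn S L' ⊂ labIn S L

/-- Preferred labelling: complete with `⊆`-maximal `in(L)`. -/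
def PreferredLab (S : SETAF α) (L : α → Lab) : Prop :=
  CompleteLab S L ∧ ∀ L', CompleteLab S L' → ¬ labIn S L ⊂ labIn S L'

/-- Stable labelling: complete with `undec(L) = ∅`. -/
def StableLab (S : SETAF α) (L : α → Lab) : Prop :=
  CompleteLab S L ∧ labUnd S L = ∅

/-- Semi-stable labelling: complete with `⊆`-minimal `undec(L)`. -/
def SemiStableLab (S : SETAF α) (L : α → Lab) : Prop :=
  CompleteLab S L ∧ ∀ L', CompleteLab S L' → ¬ labUnd S L' ⊂ labUnd S L

/-- `L2I_P`: the interpretation associated with a labelling of `𝔄_P`. -/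
def L2I (P : NLP α) (L : α → Lab) : Interp α where
  T := { c | c ∈ HB P ∧ c ∈ argsOf P ∧ L c = Lab.inn }
  F := { c | c ∈ HB P ∧ (c ∉ argsOf P ∨ (c ∈ argsOf P ∧ L c = Lab.out)) }

open Classical in
/-- `I2L`: the labelling associated with an interpretation (meaningful on
the arguments). -/
noncomputable def I2L (I : Interp α) : α → Lab := fun c =>
  if c ∈ I.T then Lab.inn else if c ∈ I.F then Lab.out else Lab.und

/-- `L2I_𝔄`: the interpretation `⟨in(L), out(L)⟩` associated with a labelling
of a SETAF `𝔄`. -/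
def L2Iset (S : SETAF α) (L : α → Lab) : Interp α := ⟨labIn S L, labOut S L⟩

/-- `V` meets every attacker of `a` in `S`. -/
def HitsAtt (S : SETAF α) (a : α) (V : Finset α) : Prop :=
  ∀ B, S.att B a → ∃ b ∈ B, b ∈ V

/-- `V ∈ V_a`: a `⊆`-minimal set of arguments meeting every attacker of `a`. -/
def MemVa (S : SETAF α) (a : α) (V : Finset α) : Prop :=
  V ⊆ S.args ∧ HitsAtt S a V ∧ ∀ V', V' ⊂ V → ¬ HitsAtt S a V'

open Classical in
/-- The NLP `P_𝔄` associated with a SETAF `𝔄`: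
`{ a ← not b₁,…,not b_n | a ∈ A, {b₁,…,b_n} ∈ V_a }`. -/
noncomputable def nlpOf (S : SETAF α) : NLP α :=
  ((S.args ×ˢ S.args.powerset).filter (fun p => MemVa S p.1 p.2)).image
    (fun p => { head := p.1, bodyPos := ∅, bodyNeg := p.2 })

/-- Redundancy-Free Atomic Logic Program: every rule is atomic (no positive
body), every atom is a head, and no rule's negative body strictly contains
that of another rule with the same head. -/
def IsRFALP (P : NLP α) : Prop :=
  (∀ r ∈ P, r.bodyPos = ∅) ∧
  HB P = P.image Rule.head ∧
  ∀ r ∈ P, ∀ r' ∈ P, r'.head = r.head → ¬ r'.bodyNeg ⊂ r.bodyNeg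

/-- Unfolding: replace a rule `c ← a, a₁,…,a_m, not b₁,…,not b_n` by all rules
obtained by resolving `a` against the rules of the program with head `a`. -/
def StepU (P₁ P₂ : NLP α) : Prop :=
  ∃ r ∈ P₁, ∃ a ∈ r.bodyPos,
    P₂ = P₁.erase r ∪
      (P₁.filter (fun r' => r'.head = a)).image
        (fun r' => { head := r.head,
                     bodyPos := r'.bodyPos ∪ r.bodyPos.erase a,
                     bodyNeg := r'.bodyNeg ∪ r.bodyNeg })

/-- Elimination of tautologies: delete a rule whose head occurs in its
positive body. -/
def StepT (P₁ P₂ : NLP α) : Prop :=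
  ∃ r ∈ P₁, r.head ∈ r.bodyPos ∧ P₂ = P₁.erase r

/-- Positive reduction: delete a literal `not b` from the body of a rule,
where `b` is not the head of any rule of the program. -/
def StepP (P₁ P₂ : NLP α) : Prop :=
  ∃ r ∈ P₁, ∃ b ∈ r.bodyNeg, (∀ r' ∈ P₁, r'.head ≠ b) ∧
    P₂ = insert { head := r.head, bodyPos := r.bodyPos,
                  bodyNeg := r.bodyNeg.erase b } (P₁.erase r)

/-- Elimination of non-minimal rules: delete a rule subsumed by a distinct
rule with the same head and smaller bodies. -/
def StepM (P₁ P₂ : NLP α) : Prop :=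
  ∃ r ∈ P₁, ∃ r' ∈ P₁, r ≠ r' ∧ r'.head = r.head ∧
    r'.bodyPos ⊆ r.bodyPos ∧ r'.bodyNeg ⊆ r.bodyNeg ∧ P₂ = P₁.erase r

/-- `↦_UTPM`: the union of the four transformations. -/
def StepUTPM (P₁ P₂ : NLP α) : Prop :=
  StepU P₁ P₂ ∨ StepT P₁ P₂ ∨ StepP P₁ P₂ ∨ StepM P₁ P₂

/-- `P` is irreducible w.r.t. `↦_UTPM`: there is no `P' ≠ P` with
`P ↦_UTPM P'`. -/
def UTPMIrreducible (P : NLP α) : Prop :=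
  ¬ ∃ P', StepUTPM P P' ∧ P' ≠ P


section StableAux

attribute [local instance] Classical.propDecidable

lemma Interp.ext' {I J : Interp α} (h1 : I.T = J.T) (h2 : I.F = J.F) : I = J := by
  cases I; cases J; simp_all

lemma head_mem_HB {P : NLP α} {r : Rule α} (hr : r ∈ P) : r.head ∈ HB P :=
  Finset.mem_sup.2 ⟨r, hr, Finset.mem_insert_self _ _⟩

lemma bodyPos_sub_HB {P : NLP α} {r : Rule α} (hr : r ∈ P) {a : α}
    (ha : a ∈ r.bodyPos) : a ∈ HB P :=
  Finset.mem_sup.2 ⟨r, hr, Finset.mem_insert_of_mem (Finset.mem_union_left _ ha)⟩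

lemma bodyNeg_sub_HB {P : NLP α} {r : Rule α} (hr : r ∈ P) {b : α}
    (hb : b ∈ r.bodyNeg) : b ∈ HB P :=
  Finset.mem_sup.2 ⟨r, hr, Finset.mem_insert_of_mem (Finset.mem_union_right _ hb)⟩

lemma stmt_mem_HB {P : NLP α} {c : α} {V : Finset α} {R : Finset (Rule α)}
    (h : IsStatement P c V R) : c ∈ HB P ∧ ∀ v ∈ V, v ∈ HB P := by
  induction h with
  | mk r hr v ρ hsub hnr ih =>
    refine ⟨head_mem_HB hr, ?_⟩
    intro b hb
    rcases Finset.mem_union.1 hb with hb | hb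
    · obtain ⟨a, ha, hba⟩ := Finset.mem_biUnion.1 hb
      exact (ih a ha).2 b hba
    · exact bodyNeg_sub_HB hr hb

lemma exists_min_subset (Q : Finset α → Prop) :
    ∀ S : Finset α, Q S → ∃ B, B ⊆ S ∧ Q B ∧ ∀ B', B' ⊂ B → ¬ Q B' := by
  intro S
  induction S using Finset.strongInduction with
  | _ S ih =>
    intro hS
    by_cases h : ∃ B', B' ⊂ S ∧ Q B'
    · obtain ⟨B', hB'S, hQB'⟩ := h
      obtain ⟨B, hBB', hQ, hmin⟩ := ih B' hB'S hQB'
      exact ⟨B, hBB'.trans hB'S.subset, hQ, hmin⟩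
    · push_neg at h
      exact ⟨S, Finset.Subset.refl S, hS, fun B' hB' => h B' hB'⟩

lemma finset_bdd {s : Finset α} {p : α → ℕ → Prop}
    (hmono : ∀ a m n, m ≤ n → p a m → p a n)
    (h : ∀ a ∈ s, ∃ n, p a n) : ∃ n, ∀ a ∈ s, p a n := by
  classical
  induction s using Finset.induction with
  | empty => exact ⟨0, by simp⟩
  | @insert a s ha ih =>
    obtain ⟨n1, hn1⟩ := h a (Finset.mem_insert_self a s)
    obtain ⟨n2, hn2⟩ := ih (fun b hb => h b (Finset.mem_insert_of_mem hb))
    refine ⟨max n1 n2, ?_⟩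
    intro b hb
    rcases Finset.mem_insert.1 hb with rfl | hb
    · exact hmono b n1 _ (le_max_left n1 n2) hn1
    · exact hmono b n2 _ (le_max_right n1 n2) (hn2 b hb)

lemma psiIter_T_mono {H : Finset α} {Q : Set (PosRule α)} :
    ∀ n, (PsiIter H Q n).T ⊆ (PsiIter H Q (n+1)).T := by
  intro n
  induction n with
  | zero =>
    intro c hc
    simp only [PsiIter] at hc
    exact absurd hc (Set.notMem_empty c)
  | succ n ih =>
    rintro c ⟨hc, q, hq, h1, h2, h3⟩
    exact ⟨hc, q, hq, h1, h2, fun a ha => ih (h3 a ha)⟩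

lemma psiIter_T_le {H : Finset α} {Q : Set (PosRule α)} {m n : ℕ} (h : m ≤ n) :
    (PsiIter H Q m).T ⊆ (PsiIter H Q n).T := by
  induction n, h using Nat.le_induction with
  | base => exact fun _ h => h
  | succ n hmn ih => exact ih.trans (psiIter_T_mono n)

lemma reduct_not_hasU {P : NLP α} {I : Interp α} (htot : I.T ∪ I.F = ↑(HB P))
    {q : PosRule α} (hq : q ∈ reduct P I) : ¬ q.hasU := by
  obtain ⟨r, hr, hneg, -, -, hU⟩ := hq
  intro hu
  obtain ⟨b, hb, hbF⟩ := hU.1 hu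
  have hbHB : b ∈ I.T ∪ I.F :=
    (Set.ext_iff.1 htot b).2 (Finset.mem_coe.2 (bodyNeg_sub_HB hr hb))
  rcases hbHB with h | h
  · exact hneg b hb h
  · exact hbF h

lemma reduct_body_sub {P : NLP α} {I : Interp α} {q : PosRule α}
    (hq : q ∈ reduct P I) : ∀ a ∈ q.bodyPos, a ∈ HB P := by
  obtain ⟨r, hr, -, -, hbody, -⟩ := hq
  intro a ha
  exact bodyPos_sub_HB hr (hbody ▸ ha)

lemma psiIter_F_eq {P : NLP α} {I : Interp α} (htot : I.T ∪ I.F = ↑(HB P)) :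
    ∀ n, (PsiIter (HB P) (reduct P I) n).F
        = ↑(HB P) \ (PsiIter (HB P) (reduct P I) n).T := by
  intro n
  induction n with
  | zero => simp [PsiIter]
  | succ n ih =>
    ext c
    constructor
    · rintro ⟨hcH, hall⟩
      refine ⟨hcH, ?_⟩
      rintro ⟨-, q, hq, hqh, -, hqb⟩
      obtain ⟨a, ha, haF⟩ := hall q hq hqh
      rw [ih] at haF
      exact haF.2 (hqb a ha)
    · rintro ⟨hcH, hnT⟩
      refine ⟨hcH, ?_⟩
      intro q hq hqh
      by_contra hno
      push_neg at hno
      refine hnT ⟨hcH, q, hq, hqh, reduct_not_hasU htot hq, ?_⟩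
      intro a ha
      have h1 : a ∉ (PsiIter (HB P) (reduct P I) n).F := hno a ha
      rw [ih] at h1
      by_contra haT
      exact h1 ⟨Finset.mem_coe.2 (reduct_body_sub hq a ha), haT⟩

lemma stmt_derivable {P : NLP α} {I : Interp α} (hdisj : Disjoint I.T I.F)
    {c : α} {V : Finset α} {R : Finset (Rule α)} (h : IsStatement P c V R) :
    ↑V ⊆ I.F → ∃ n, c ∈ (PsiIter (HB P) (reduct P I) n).T := by
  induction h with
  | mk r hr v ρ hsub hnr ih =>
    intro hVF
    have hch : ∀ a ∈ r.bodyPos, ∃ n, a ∈ (PsiIter (HB P) (reduct P I) n).T := by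
      intro a ha
      refine ih a ha ?_
      intro b hb
      exact hVF (Finset.mem_coe.2 (Finset.mem_union_left _
        (Finset.mem_biUnion.2 ⟨a, ha, Finset.mem_coe.1 hb⟩)))
    obtain ⟨N, hN⟩ := finset_bdd
      (p := fun a n => a ∈ (PsiIter (HB P) (reduct P I) n).T)
      (fun a m n hmn hm => psiIter_T_le hmn hm) hch
    have hnegF : ∀ b ∈ r.bodyNeg, b ∈ I.F := fun b hb =>
      hVF (Finset.mem_coe.2 (Finset.mem_union_right _ hb))
    refine ⟨N + 1, head_mem_HB hr,
      ⟨r.head, r.bodyPos, ∃ b ∈ r.bodyNeg, b ∉ I.F⟩, ?_, rfl, ?_, hN⟩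
    · exact ⟨r, hr, fun b hb hbT => Set.disjoint_left.1 hdisj hbT (hnegF b hb),
        rfl, rfl, Iff.rfl⟩
    · rintro ⟨b, hb, hbF⟩
      exact hbF (hnegF b hb)

lemma derivable_stmt {P : NLP α} {I : Interp α} (htot : I.T ∪ I.F = ↑(HB P)) :
    ∀ m c, c ∈ (PsiIter (HB P) (reduct P I) m).T →
      (∀ k < m, c ∉ (PsiIter (HB P) (reduct P I) k).T) →
      ∃ V R, IsStatement P c V R ∧ ↑V ⊆ I.F ∧
        ∀ r' ∈ R, ∃ j, j ≤ m ∧ r'.head ∈ (PsiIter (HB P) (reduct P I) j).T := by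
  intro m
  induction m using Nat.strong_induction_on with
  | _ m ih =>
    intro c hc hmin
    cases m with
    | zero =>
      simp only [PsiIter] at hc
      exact absurd hc (Set.notMem_empty c)
    | succ n =>
      have hc' := hc
      obtain ⟨hcH, q, hq, hqhead, hqU, hqbody⟩ := hc
      have hq' := hq
      obtain ⟨r, hr, hneg, hhead, hbody, hUiff⟩ := hq
      have hx : ∀ a, ∃ V R j, a ∈ r.bodyPos →
          j ≤ n ∧ IsStatement P a V R ∧ ↑V ⊆ I.F ∧
          ∀ r' ∈ R, ∃ j', j' ≤ j ∧ r'.head ∈ (PsiIter (HB P) (reduct P I) j').T := by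
        intro a
        by_cases ha : a ∈ r.bodyPos
        · have haT : a ∈ (PsiIter (HB P) (reduct P I) n).T := hqbody a (hbody ▸ ha)
          have hex : ∃ k, a ∈ (PsiIter (HB P) (reduct P I) k).T := ⟨n, haT⟩
          have hj : Nat.find hex ≤ n := Nat.find_min' hex haT
          obtain ⟨V, R, hs, hVF, hrules⟩ :=
            ih (Nat.find hex) (Nat.lt_succ_of_le hj) a (Nat.find_spec hex)
              (fun k hk => Nat.find_min hex hk)
          exact ⟨V, R, Nat.find hex, fun _ => ⟨hj, hs, hVF, hrules⟩⟩
        · exact ⟨∅, ∅, 0, fun h => absurd h ha⟩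
      choose v ρ jf hx using hx
      have hrc : r.head = c := hhead ▸ hqhead
      have hnr : ∀ a ∈ r.bodyPos, r ∉ ρ a := by
        intro a ha hmem
        obtain ⟨j', hj', hhd⟩ := (hx a ha).2.2.2 r hmem
        rw [hrc] at hhd
        exact hmin j' (Nat.lt_succ_of_le (hj'.trans (hx a ha).1)) hhd
      have hst := IsStatement.mk r hr v ρ (fun a ha => (hx a ha).2.1) hnr
      rw [hrc] at hst
      refine ⟨_, _, hst, ?_, ?_⟩
      · intro b hb
        rcases Finset.mem_union.1 (Finset.mem_coe.1 hb) with hb' | hb'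
        · obtain ⟨a, ha, hba⟩ := Finset.mem_biUnion.1 hb'
          exact (hx a ha).2.2.1 (Finset.mem_coe.2 hba)
        · have hbT : b ∉ I.T := hneg b hb'
          have hbm : b ∈ I.T ∪ I.F :=
            (Set.ext_iff.1 htot b).2 (Finset.mem_coe.2 (bodyNeg_sub_HB hr hb'))
          exact hbm.resolve_left hbT
      · intro r' hr'
        rcases Finset.mem_insert.1 hr' with rfl | hr'
        · refine ⟨n + 1, le_refl _, ?_⟩
          rw [hrc]
          exact hc'
        · obtain ⟨a, ha, hmem⟩ := Finset.mem_biUnion.1 hr'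
          obtain ⟨j', hj', hhd⟩ := (hx a ha).2.2.2 r' hmem
          exact ⟨j', hj'.trans ((hx a ha).1.trans (Nat.le_succ n)), hhd⟩

lemma omega_char {P : NLP α} {I : Interp α} (hI : IsInterp (HB P) I)
    (htot : I.T ∪ I.F = ↑(HB P)) :
    OmegaOp (HB P) P I = I ↔
      I.T = {c | ∃ V R, IsStatement P c V R ∧ ↑V ⊆ I.F} := by
  have hT : (OmegaOp (HB P) P I).T
      = {c | ∃ V R, IsStatement P c V R ∧ ↑V ⊆ I.F} := by
    ext c
    simp only [OmegaOp, Set.mem_iUnion, Set.mem_setOf_eq]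
    constructor
    · rintro ⟨n, hn⟩
      have hex : ∃ k, c ∈ (PsiIter (HB P) (reduct P I) k).T := ⟨n, hn⟩
      obtain ⟨V, R, hs, hVF, -⟩ :=
        derivable_stmt htot (Nat.find hex) c (Nat.find_spec hex)
          (fun k hk => Nat.find_min hex hk)
      exact ⟨V, R, hs, hVF⟩
    · rintro ⟨V, R, hs, hVF⟩
      exact stmt_derivable hI.2.2 hs hVF
  have hF : (OmegaOp (HB P) P I).F = ↑(HB P) \ (OmegaOp (HB P) P I).T := by
    show (⋂ n, (PsiIter (HB P) (reduct P I) n).F)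
        = ↑(HB P) \ ⋃ n, (PsiIter (HB P) (reduct P I) n).T
    rw [Set.iInter_congr (psiIter_F_eq htot)]
    exact (Set.diff_iUnion _ _).symm
  have hIF : I.F = ↑(HB P) \ I.T := by
    ext c
    constructor
    · intro hc
      exact ⟨(Set.ext_iff.1 htot c).1 (Set.mem_union_right _ hc),
        fun hcT => Set.disjoint_left.1 hI.2.2 hcT hc⟩
    · rintro ⟨hcH, hcT⟩
      rcases (Set.ext_iff.1 htot c).2 hcH with h | h
      · exact absurd h hcT
      · exact h
  constructor
  · intro h
    exact (congrArg Interp.T h.symm).trans hT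
  · intro h
    refine Interp.ext' (hT.trans h.symm) ?_
    rw [hF, hT, ← h]
    exact hIF.symm

lemma mem_argsOf {P : NLP α} {c : α} :
    c ∈ argsOf P ↔ c ∈ HB P ∧ IsArg P c := by
  unfold argsOf
  exact Finset.mem_filter

lemma hits_of_no_stmt {P : NLP α} {L : α → Lab} {c : α}
    (htot : (L2I P L).T ∪ (L2I P L).F = ↑(HB P))
    (hno : ∀ V R, IsStatement P c V R → ¬ ↑V ⊆ (L2I P L).F) :
    HitsVul P ((argsOf P).filter (fun b => L b = Lab.inn)) c := by
  intro V R hs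
  obtain ⟨v, hvV, hvF⟩ := Set.not_subset.1 (hno V R hs)
  have hvHB : v ∈ HB P := (stmt_mem_HB hs).2 v (Finset.mem_coe.1 hvV)
  have hvTF : v ∈ (L2I P L).T ∪ (L2I P L).F :=
    (Set.ext_iff.1 htot v).2 (Finset.mem_coe.2 hvHB)
  have hvT := hvTF.resolve_right hvF
  exact ⟨v, Finset.mem_filter.2 ⟨hvT.2.1, hvT.2.2⟩, Finset.mem_coe.1 hvV⟩

lemma l2i_interp (P : NLP α) (L : α → Lab) : IsInterp (HB P) (L2I P L) := by
  refine ⟨fun c hc => Finset.mem_coe.2 hc.1, fun c hc => Finset.mem_coe.2 hc.1, ?_⟩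
  rw [Set.disjoint_left]
  rintro c ⟨hcHB, harg, hinn⟩ ⟨-, h | ⟨-, hout⟩⟩
  · exact h harg
  · rw [hinn] at hout
    exact Lab.noConfusion hout

lemma l2i_total {P : NLP α} {L : α → Lab} (hund : labUnd (setafOf P) L = ∅) :
    (L2I P L).T ∪ (L2I P L).F = ↑(HB P) := by
  ext c
  constructor
  · rintro (h | h) <;> exact Finset.mem_coe.2 h.1
  · intro hc
    have hcHB : c ∈ HB P := Finset.mem_coe.1 hc
    by_cases harg : c ∈ argsOf P
    · cases hLc : L c with
      | inn => exact Or.inl ⟨hcHB, harg, hLc⟩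
      | out => exact Or.inr ⟨hcHB, Or.inr ⟨harg, hLc⟩⟩
      | und =>
        exfalso
        have hmem : c ∈ labUnd (setafOf P) L := ⟨harg, hLc⟩
        rw [hund] at hmem
        exact hmem
    · exact Or.inr ⟨hcHB, Or.inl harg⟩

end StableAux

theorem stmt6 (P : NLP α) (L : α → Lab) :
    StableLab (setafOf P) L ↔ IsStableModel (HB P) P (L2I P L) := by
  constructor
  · rintro ⟨⟨hadm, -⟩, hund⟩
    have hInt := l2i_interp P L
    have hTF := l2i_total hund
    refine ⟨⟨hInt, ?_⟩, hTF⟩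
    rw [omega_char hInt hTF]
    ext c
    simp only [Set.mem_setOf_eq]
    constructor
    · rintro ⟨hcHB, hcarg, hinn⟩
      by_contra hno
      push_neg at hno
      have hhit := hits_of_no_stmt hTF hno
      obtain ⟨B, hBT, hQB, hmin⟩ := exists_min_subset (fun B => HitsVul P B c) _ hhit
      have hatt : (setafOf P).att B c :=
        ⟨hBT.trans (Finset.filter_subset _ _), hcarg, hQB, hmin⟩
      obtain ⟨b, hbB, hbout⟩ := (hadm c hcarg).1 hinn B hatt
      have hbinn : L b = Lab.inn := (Finset.mem_filter.1 (hBT hbB)).2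
      rw [hbinn] at hbout
      exact Lab.noConfusion hbout
    · rintro ⟨V, R, hs, hVF⟩
      have hcHB : c ∈ HB P := (stmt_mem_HB hs).1
      have hcarg : c ∈ argsOf P := mem_argsOf.2 ⟨hcHB, V, R, hs⟩
      refine ⟨hcHB, hcarg, ?_⟩
      cases hLc : L c with
      | inn => rfl
      | und =>
        exfalso
        have hmem : c ∈ labUnd (setafOf P) L := ⟨hcarg, hLc⟩
        rw [hund] at hmem
        exact hmem
      | out =>
        exfalso
        obtain ⟨B, hatt, hin⟩ := (hadm c hcarg).2 hLc
        obtain ⟨b, hbB, hbV⟩ := hatt.2.2.1 V R hs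
        have hbF : b ∈ (L2I P L).F := hVF (Finset.mem_coe.2 hbV)
        have hbarg : b ∈ argsOf P := hatt.1 hbB
        rcases hbF.2 with h | ⟨-, hout⟩
        · exact h hbarg
        · rw [hin b hbB] at hout
          exact Lab.noConfusion hout
  · rintro ⟨⟨hInt, hfix⟩, hTF⟩
    have hchar := (omega_char hInt hTF).1 hfix
    have hund : labUnd (setafOf P) L = ∅ := by
      ext a
      simp only [Set.mem_empty_iff_false, iff_false]
      rintro ⟨harg, hu⟩
      have haHB : a ∈ HB P := (mem_argsOf.1 harg).1
      have hmem : a ∈ (L2I P L).T ∪ (L2I P L).F :=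
        (Set.ext_iff.1 hTF a).2 (Finset.mem_coe.2 haHB)
      rcases hmem with h | h
      · obtain ⟨-, -, hinn⟩ := h
        rw [hu] at hinn
        exact Lab.noConfusion hinn
      · rcases h.2 with h' | h'
        · exact h' harg
        · rw [hu] at h'
          exact Lab.noConfusion h'.2
    refine ⟨⟨?_, ?_⟩, hund⟩
    · intro a harg
      constructor
      · intro hinn B hattB
        have haT : a ∈ (L2I P L).T := ⟨(mem_argsOf.1 harg).1, harg, hinn⟩
        rw [hchar] at haT
        obtain ⟨V, R, hs, hVF⟩ := haT
        obtain ⟨b, hbB, hbV⟩ := hattB.2.2.1 V R hs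
        have hbF : b ∈ (L2I P L).F := hVF (Finset.mem_coe.2 hbV)
        have hbarg : b ∈ argsOf P := hattB.1 hbB
        rcases hbF.2 with h | ⟨-, hout⟩
        · exact absurd hbarg h
        · exact ⟨b, hbB, hout⟩
      · intro hout
        have haF : a ∈ (L2I P L).F :=
          ⟨(mem_argsOf.1 harg).1, Or.inr ⟨harg, hout⟩⟩
        have haT : a ∉ (L2I P L).T := fun h => Set.disjoint_left.1 hInt.2.2 h haF
        rw [hchar] at haT
        have hno : ∀ V R, IsStatement P a V R → ¬ ↑V ⊆ (L2I P L).F := by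
          intro V R hs hVF
          exact haT ⟨V, R, hs, hVF⟩
        have hhit := hits_of_no_stmt hTF hno
        obtain ⟨B, hBT, hQB, hmin⟩ := exists_min_subset (fun B => HitsVul P B a) _ hhit
        refine ⟨B, ⟨hBT.trans (Finset.filter_subset _ _), harg, hQB, hmin⟩, ?_⟩
        intro b hbB
        exact (Finset.mem_filter.1 (hBT hbB)).2
    · intro a harg hu
      exfalso
      have hmem : a ∈ labUnd (setafOf P) L := ⟨harg, hu⟩
      rw [hund] at hmem
      exact hmem
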